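/- Let C be a small category with a thin, complete SFS (ℰ, ℳ) unital at ζ, and let ∗ be the induced binary operation on objects. For objects a, x there exists an ℰ-morphism a → x in C if and only if x = a ∗ v for some object v; dually, for objects x, b there exists an ℳ-morphism x → b in C if and only if x = u ∗ b for some object u. -/
import Mathlib


open CategoryTheory

universe v u

/-- A strict factorization system `(ℰ, ℳ)` on a category `C`: two classes of
morphisms, each containing identities and closed under composition, such that
every morphism factors uniquely as an `ℰ`-morphism followed by an `ℳ`-morphism. -/
structure SFS (C : Type u) [Category.{v} C] where
  E : ∀ ⦃X Y : C⦄, (X ⟶ Y) → Prop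
  M : ∀ ⦃X Y : C⦄, (X ⟶ Y) → Prop
  E_id : ∀ X : C, E (𝟙 X)
  M_id : ∀ X : C, M (𝟙 X)
  E_comp : ∀ ⦃X Y Z : C⦄ (f : X ⟶ Y) (g : Y ⟶ Z), E f → E g → E (f ≫ g)
  M_comp : ∀ ⦃X Y Z : C⦄ (f : X ⟶ Y) (g : Y ⟶ Z), M f → M g → M (f ≫ g)
  fact : ∀ ⦃X Y : C⦄ (f : X ⟶ Y),
    ∃! p : Σ d : C, (X ⟶ d) × (d ⟶ Y), E p.2.1 ∧ M p.2.2 ∧ p.2.1 ≫ p.2.2 = f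

namespace SFS

variable {C : Type u} [Category.{v} C] (S : SFS C)

/-- The SFS is thin: at most one `ℰ`-morphism and at most one `ℳ`-morphism
between any two objects. -/
def Thin : Prop :=
  (∀ ⦃X Y : C⦄ (f g : X ⟶ Y), S.E f → S.E g → f = g) ∧
  (∀ ⦃X Y : C⦄ (f g : X ⟶ Y), S.M f → S.M g → f = g)

/-- The SFS is unital at `ζ`: for every object `a` there is exactly one
`ℰ`-morphism `ζ ⟶ a` and exactly one `ℳ`-morphism `a ⟶ ζ`. -/
def UnitalAt (ζ : C) : Prop :=
  (∀ a : C, ∃! e : ζ ⟶ a, S.E e) ∧ (∀ a : C, ∃! m : a ⟶ ζ, S.M m)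

/-- The SFS is complete: both square-filling conditions. -/
def Complete : Prop :=
  (∀ ⦃a b c : C⦄ (e : a ⟶ b) (m : a ⟶ c), S.E e → S.M m →
    ∃ (d : C) (e' : c ⟶ d) (m' : b ⟶ d), S.E e' ∧ S.M m' ∧ m ≫ e' = e ≫ m') ∧
  (∀ ⦃b c d : C⦄ (e' : c ⟶ d) (m' : b ⟶ d), S.E e' → S.M m' →
    ∃ (a : C) (e : a ⟶ b) (m : a ⟶ c), S.E e ∧ S.M m ∧ m ≫ e' = e ≫ m')

/-- The middle object of the unique `(ℰ, ℳ)`-factorization of `f`. -/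
noncomputable def mid ⦃X Y : C⦄ (f : X ⟶ Y) : C :=
  (S.fact f).exists.choose.1

/-- The unique `ℰ`-morphism `ζ ⟶ a` (`e_a`) of an SFS unital at `ζ`. -/
noncomputable def eU {ζ : C} (h : S.UnitalAt ζ) (a : C) : ζ ⟶ a :=
  (h.1 a).exists.choose

/-- The unique `ℳ`-morphism `a ⟶ ζ` (`m_a`) of an SFS unital at `ζ`. -/
noncomputable def mU {ζ : C} (h : S.UnitalAt ζ) (a : C) : a ⟶ ζ :=
  (h.2 a).exists.choose

/-- The induced operation on objects: `a ∗ b` is the middle object of the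
unique `(ℰ, ℳ)`-factorization of `m_a ≫ e_b : a ⟶ b`. -/
noncomputable def star {ζ : C} (h : S.UnitalAt ζ) (a b : C) : C :=
  S.mid (S.mU h a ≫ S.eU h b)

lemma fact_spec ⦃X Y : C⦄ (f : X ⟶ Y) :
    S.E (S.fact f).exists.choose.2.1 ∧ S.M (S.fact f).exists.choose.2.2 ∧
      (S.fact f).exists.choose.2.1 ≫ (S.fact f).exists.choose.2.2 = f :=
  (S.fact f).exists.choose_spec

lemma mid_eq ⦃X Y : C⦄ (f : X ⟶ Y) {d : C} (e : X ⟶ d) (m : d ⟶ Y)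
    (hE : S.E e) (hM : S.M m) (hc : e ≫ m = f) : S.mid f = d := by
  have h := (S.fact f).unique (S.fact_spec f)
    (show S.E (⟨d, e, m⟩ : Σ d : C, (X ⟶ d) × (d ⟶ Y)).2.1 ∧ _ ∧ _ from ⟨hE, hM, hc⟩)
  exact congrArg Sigma.fst h

lemma eU_spec {ζ : C} (h : S.UnitalAt ζ) (a : C) : S.E (S.eU h a) :=
  (h.1 a).exists.choose_spec

lemma mU_spec {ζ : C} (h : S.UnitalAt ζ) (a : C) : S.M (S.mU h a) :=
  (h.2 a).exists.choose_spec

lemma eU_unique {ζ : C} (h : S.UnitalAt ζ) {a : C} (e : ζ ⟶ a) (he : S.E e) :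
    e = S.eU h a := (h.1 a).unique he (S.eU_spec h a)

lemma mU_unique {ζ : C} (h : S.UnitalAt ζ) {a : C} (m : a ⟶ ζ) (hm : S.M m) :
    m = S.mU h a := (h.2 a).unique hm (S.mU_spec h a)

lemma star_e {ζ : C} (h : S.UnitalAt ζ) (a b : C) :
    ∃ e : a ⟶ S.star h a b, S.E e :=
  ⟨(S.fact (S.mU h a ≫ S.eU h b)).exists.choose.2.1,
    (S.fact_spec (S.mU h a ≫ S.eU h b)).1⟩

lemma star_m {ζ : C} (h : S.UnitalAt ζ) (a b : C) :
    ∃ m : S.star h a b ⟶ b, S.M m :=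
  ⟨(S.fact (S.mU h a ≫ S.eU h b)).exists.choose.2.2,
    (S.fact_spec (S.mU h a ≫ S.eU h b)).2.1⟩

end SFS

/-- Let `C` be a small category with a thin, complete SFS `(ℰ, ℳ)`
unital at `ζ`, with induced operation `∗`. For objects `a, x` there exists an
`ℰ`-morphism `a ⟶ x` iff `x = a ∗ v` for some object `v`; dually, for objects `x, b`
there exists an `ℳ`-morphism `x ⟶ b` iff `x = u ∗ b` for some object `u`. -/
theorem exists_E_iff_star {C : Type u} [SmallCategory C] (S : SFS C)
    (hT : S.Thin) (ζ : C) (hU : S.UnitalAt ζ) (hC : S.Complete) :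
    (∀ a x : C, (∃ e : a ⟶ x, S.E e) ↔ ∃ v : C, x = S.star hU a v) ∧
    (∀ x b : C, (∃ m : x ⟶ b, S.M m) ↔ ∃ u : C, x = S.star hU u b) := by
  constructor
  · intro a x
    constructor
    · rintro ⟨e, he⟩
      obtain ⟨d, e', m', hE', hM', hcomm⟩ := hC.1 e (S.mU hU a) he (S.mU_spec hU a)
      refine ⟨d, (S.mid_eq _ e m' he hM' ?_).symm⟩
      rw [← S.eU_unique hU e' hE', hcomm]
    · rintro ⟨v, rfl⟩
      exact S.star_e hU a v
  · intro x b
    constructor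
    · rintro ⟨m, hm⟩
      obtain ⟨u, e, m', hE, hM', hcomm⟩ := hC.2 (S.eU hU b) m (S.eU_spec hU b) hm
      refine ⟨u, (S.mid_eq _ e m hE hm ?_).symm⟩
      rw [← S.mU_unique hU m' hM', hcomm]
    · rintro ⟨u, rfl⟩
      exact S.star_m hU u b
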